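/- arXiv:2603.19604 — 3 statements merged into one kernel-verified Lean document; each statement's English description precedes it below -/
import Mathlib

section
/- Let {aₙ} be a sequence of nonnegative real numbers such that there exists a subsequence {a_{n_j}} with a_{n_j} < a_{n_j + 1} for all j. For n ≥ n₀ (where n₀ is chosen so that such an index exists), define μ(n) = max{k ∈ ℕ : n₀ ≤ k ≤ n, a_k < a_{k+1}}. Then the sequence {μ(n)} is nondecreasing with μ(n) → ∞, and for all n ≥ n₀ it holds that a_{μ(n)} ≤ a_{μ(n)+1} and a_n ≤ a_{μ(n)+1}. -/
open Filter

theorem mainge_indexing_lemma (a : ℕ → ℝ) (ha : ∀ n, 0 ≤ a n)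
    (φ : ℕ → ℕ) (hφ : StrictMono φ) (hsub : ∀ j, a (φ j) < a (φ j + 1))
    (n₀ : ℕ) (hn₀ : a n₀ < a (n₀ + 1) ∧ ∀ k < n₀, ¬ a k < a (k + 1))
    (μ : ℕ → ℕ)
    (hμ : ∀ n ≥ n₀, IsGreatest {k : ℕ | n₀ ≤ k ∧ k ≤ n ∧ a k < a (k + 1)} (μ n)) :
    (∀ m n, n₀ ≤ m → m ≤ n → μ m ≤ μ n) ∧
      Tendsto μ atTop atTop ∧
      ∀ n ≥ n₀, a (μ n) ≤ a (μ n + 1) ∧ a n ≤ a (μ n + 1) := by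
  have hmono : ∀ m n, n₀ ≤ m → m ≤ n → μ m ≤ μ n := by
    intro m n hm hmn
    have h1 := hμ m hm
    have h2 := hμ n (hm.trans hmn)
    exact h2.2 ⟨h1.1.1, h1.1.2.1.trans hmn, h1.1.2.2⟩
  refine ⟨hmono, ?_, ?_⟩
  · rw [tendsto_atTop]
    intro b
    rw [eventually_atTop]
    have hφge : ∀ j, n₀ ≤ φ j := fun j => by
      by_contra h
      exact hn₀.2 (φ j) (lt_of_not_ge h) (hsub j)
    refine ⟨φ b, fun n hn => ?_⟩
    have hb : b ≤ φ b := hφ.le_apply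
    have h2 := hμ n ((hφge b).trans hn)
    exact hb.trans (h2.2 ⟨hφge b, hn, hsub b⟩)
  · intro n hn
    obtain ⟨⟨h1, h2, h3⟩, hmax⟩ := hμ n hn
    refine ⟨h3.le, ?_⟩
    have key : ∀ m, μ n + 1 ≤ m → m ≤ n → a m ≤ a (μ n + 1) := by
      intro m
      induction m with
      | zero => intro h; omega
      | succ m ih =>
        intro hm hmn
        rcases Nat.lt_or_ge (μ n + 1) (m + 1) with h | h
        · have hm' : μ n + 1 ≤ m := by omega
          have hnot : ¬ a m < a (m + 1) := by
            intro hlt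
            have := hmax ⟨by omega, by omega, hlt⟩
            omega
          exact le_trans (not_lt.1 hnot) (ih hm' (by omega))
        · have heq : μ n + 1 = m + 1 := le_antisymm hm h
          rw [heq]
    rcases Nat.lt_or_ge n (μ n + 1) with h | h
    · have heq : n = μ n := by omega
      conv_lhs => rw [heq]
      exact h3.le
    · exact key n h le_rfl
end

section
/- Let T : ℝ^d → ℝ^d be firmly nonexpansive with x* ∈ Fix T, let f : ℝ^d → ℝ be convex, and suppose the iterates satisfy x_{n+1} = Tx_n − α_n g_n where g_n is a subgradient of f at Tx_{n−τ_n} and ‖g_n‖ ≤ C. Then for all n: ‖x_{n+1} − x*‖² ≤ ‖x_n − x*‖² − ‖x_{n+1} − x_n‖² + 2α_n C‖x_{n−τ_n} − x_n‖ + 2α_n C‖x_{n+1} − x_n‖ + 2α_n(f(x*) − f(Tx_{n−τ_n})). -/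
local notation "⟪" x ", " y "⟫" => @inner ℝ _ _ x y

set_option maxHeartbeats 1000000 in
theorem fdsm_key_inequality (d : ℕ)
    (T : EuclideanSpace ℝ (Fin d) → EuclideanSpace ℝ (Fin d))
    (hT : ∀ x y, ⟪T x - T y, x - y⟫ ≥ ‖T x - T y‖ ^ 2)
    (f : EuclideanSpace ℝ (Fin d) → ℝ)
    (hf : ConvexOn ℝ Set.univ f)
    (xstar : EuclideanSpace ℝ (Fin d)) (hxstar : T xstar = xstar)
    (x : ℤ → EuclideanSpace ℝ (Fin d)) (α : ℕ → ℝ) (hα : ∀ n, 0 < α n)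
    (τn : ℕ → ℕ) (g : ℕ → EuclideanSpace ℝ (Fin d))
    (hg : ∀ (n : ℕ) (y : EuclideanSpace ℝ (Fin d)),
      ⟪g n, y - T (x ((n : ℤ) - τn n))⟫ ≤ f y - f (T (x ((n : ℤ) - τn n))))
    (C : ℝ) (hC : 0 < C) (hgC : ∀ n, ‖g n‖ ≤ C)
    (hiter : ∀ n : ℕ, x ((n : ℤ) + 1) = T (x (n : ℤ)) - α n • g n) :
    ∀ n : ℕ,
      ‖x ((n : ℤ) + 1) - xstar‖ ^ 2 ≤
        ‖x (n : ℤ) - xstar‖ ^ 2 - ‖x ((n : ℤ) + 1) - x (n : ℤ)‖ ^ 2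
          + 2 * α n * C * ‖x ((n : ℤ) - τn n) - x (n : ℤ)‖
          + 2 * α n * C * ‖x ((n : ℤ) + 1) - x (n : ℤ)‖
          + 2 * α n * (f xstar - f (T (x ((n : ℤ) - τn n)))) := by
  intro n
  set p := x (n : ℤ) with hp
  set q := x ((n : ℤ) - τn n) with hq
  set A := T p with hA
  set B := T q with hB
  set a := α n with ha
  set G := g n with hG
  have ha0 : 0 < a := hα n
  have hs : x ((n : ℤ) + 1) = A - a • G := hiter n
  rw [hs]
  -- firm nonexpansiveness at xstar
  have h1 : ⟪A - xstar, p - xstar⟫ ≥ ‖A - xstar‖ ^ 2 := by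
    have := hT p xstar; rwa [hxstar] at this
  -- nonexpansiveness between p and q
  have h2 : ‖A - B‖ ≤ ‖p - q‖ := by
    have hfi := hT p q
    have cs := real_inner_le_norm (A - B) (p - q)
    nlinarith [norm_nonneg (A - B), norm_nonneg (p - q)]
  -- subgradient inequality at xstar
  have h3 : ⟪G, xstar - B⟫ ≤ f xstar - f B := hg n xstar
  have hCg : ‖G‖ ≤ C := hgC n
  -- Cauchy-Schwarz bounds
  have h4 : ⟪G, B - A⟫ ≤ C * ‖q - p‖ := by
    have cs := real_inner_le_norm G (B - A)
    have hn : ‖B - A‖ = ‖A - B‖ := norm_sub_rev _ _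
    have hn2 : ‖p - q‖ = ‖q - p‖ := norm_sub_rev _ _
    have hnn : (0:ℝ) ≤ ‖B - A‖ := norm_nonneg _
    have hgn : (0:ℝ) ≤ ‖G‖ := norm_nonneg _
    calc ⟪G, B - A⟫ ≤ ‖G‖ * ‖B - A‖ := cs
      _ ≤ C * ‖q - p‖ := by
          rw [hn]
          have : ‖A - B‖ ≤ ‖q - p‖ := by rw [← hn2]; exact h2
          nlinarith
  have h5 : ⟪G, p - (A - a • G)⟫ ≤ C * ‖A - a • G - p‖ := by
    have cs := real_inner_le_norm G (p - (A - a • G))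
    have hn : ‖p - (A - a • G)‖ = ‖A - a • G - p‖ := norm_sub_rev _ _
    have hgn : (0:ℝ) ≤ ‖G‖ := norm_nonneg _
    have hnn : (0:ℝ) ≤ ‖A - a • G - p‖ := norm_nonneg _
    nlinarith
  -- norm expansions
  have e1 : ‖A - a • G - xstar‖ ^ 2
      = ‖A - xstar‖ ^ 2 - 2 * a * ⟪G, A - xstar⟫ + a ^ 2 * ‖G‖ ^ 2 := by
    have h : A - a • G - xstar = (A - xstar) - a • G := by abel
    rw [h, norm_sub_sq_real, real_inner_smul_right, real_inner_comm, norm_smul,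
      mul_pow, Real.norm_eq_abs, sq_abs]
    ring
  have e2 : ‖A - a • G - p‖ ^ 2
      = ‖A - p‖ ^ 2 - 2 * a * ⟪G, A - p⟫ + a ^ 2 * ‖G‖ ^ 2 := by
    have h : A - a • G - p = (A - p) - a • G := by abel
    rw [h, norm_sub_sq_real, real_inner_smul_right, real_inner_comm, norm_smul,
      mul_pow, Real.norm_eq_abs, sq_abs]
    ring
  have e3 : ‖p - xstar‖ ^ 2
      = ‖p - A‖ ^ 2 + 2 * ⟪p - A, A - xstar⟫ + ‖A - xstar‖ ^ 2 := by
    have h : p - xstar = (p - A) + (A - xstar) := by abel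
    rw [h, norm_add_sq_real]
  -- bilinearity decompositions
  have b1 : ⟪G, A - xstar⟫ = -⟪G, B - A⟫ + -⟪G, xstar - B⟫ := by
    rw [← inner_neg_right, ← inner_neg_right, ← inner_add_right]
    congr 1
    abel
  have b2 : ⟪G, p - (A - a • G)⟫ = -⟪G, A - p⟫ + a * ‖G‖ ^ 2 := by
    rw [show p - (A - a • G) = -(A - p) + a • G by abel, inner_add_right,
      inner_neg_right, real_inner_smul_right, real_inner_self_eq_norm_sq]
  have b3 : ⟪A - xstar, p - xstar⟫ = ⟪p - A, A - xstar⟫ + ‖A - xstar‖ ^ 2 := by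
    rw [show p - xstar = (p - A) + (A - xstar) by abel, inner_add_right,
      real_inner_self_eq_norm_sq, real_inner_comm]
  have e4 : ‖p - A‖ = ‖A - p‖ := norm_sub_rev _ _
  rw [b3] at h1
  rw [b2] at h5
  have m3 : a * ⟪G, xstar - B⟫ ≤ a * (f xstar - f B) :=
    mul_le_mul_of_nonneg_left h3 ha0.le
  have m4 : a * ⟪G, B - A⟫ ≤ a * (C * ‖q - p‖) :=
    mul_le_mul_of_nonneg_left h4 ha0.le
  have m5 : a * (-⟪G, A - p⟫ + a * ‖G‖ ^ 2) ≤ a * (C * ‖A - a • G - p‖) :=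
    mul_le_mul_of_nonneg_left h5 ha0.le
  rw [e1, e2, e3, b1, e4]
  nlinarith [h1, m3, m4, m5]
end

section
/- Under the FDSM iteration x_{n+1} = Tx_n − α_n g_n with T firmly nonexpansive, f convex, g_n ∈ ∂f(Tx_{n−τ_n}), delays bounded by τ, subgradients bounded by C, nonincreasing step sizes with (3 + 2(τ+1)²)α₀^a < 8 for some a ∈ (0,1), and x* a minimizer of f over Fix T, the best achieved function values satisfy: min_{0 ≤ n ≤ N} f(x_{n+1}) − f* ≤ (‖x₀ − x*‖² + 2C² Σ_{n=0}^N α_n² + 40C² Σ_{n=0}^N α_n^{2−a}) / (2 Σ_{n=0}^N α_n) for all N ∈ ℕ. -/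
local notation "⟪" x ", " y "⟫" => @inner ℝ _ _ x y

/-!
Firm nonexpansiveness gives `‖T x - x*‖² ≤ ‖x - x*‖² - ‖T x - x‖²`; combined with the subgradient
inequality at the stale point `u = T x_{n-τ_n}` and a `C`-bounded subgradient at `x_{n+1}`, one step
satisfies
`2 α_n (f x_{n+1} - f x*) ≤ ‖x_n - x*‖² - ‖x_{n+1} - x*‖² - ‖T x_n - x_n‖² + 4 α_n C ‖T x_n - u‖
  + 3 α_n² C²`.
Young's inequality trades the delay term for `‖x_n - x_{n-τ_n}‖² / (2(τ+1)²) + 8(τ+1)² α_n² C²`.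
Summed over `n`, the squared delays are at most `τ²` times the squared increments
`‖x_{k+1} - x_k‖² ≤ 2 ‖T x_k - x_k‖² + 2 α_k² C²`, whose first parts are absorbed by the negative
terms `-‖T x_k - x_k‖²`. Telescoping leaves `‖x_0 - x*‖² + (4 + 8(τ+1)²) C² ∑ α_n²`; then
`α_n² ≤ α_0^a α_n^{2-a}` and the step-size condition bound the excess coefficient by `40`, and the
minimum of `f x_{n+1}` is at most its `α`-weighted mean.
-/

open Finset

theorem norm_sub_sq_le_mul_sum_Ico {E : Type*} [SeminormedAddCommGroup E] (y : ℕ → E)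
    {m n : ℕ} (hmn : m ≤ n) :
    ‖y n - y m‖ ^ 2 ≤ (n - m : ℕ) * ∑ k ∈ Ico m n, ‖y (k + 1) - y k‖ ^ 2 := by
  have htri : ‖y n - y m‖ ≤ ∑ k ∈ Ico m n, ‖y (k + 1) - y k‖ := by
    simpa only [dist_eq_norm, norm_sub_rev] using dist_le_Ico_sum_dist y hmn
  calc ‖y n - y m‖ ^ 2 ≤ (∑ k ∈ Ico m n, ‖y (k + 1) - y k‖) ^ 2 := by gcongr
    _ ≤ _ := by
      simpa only [Nat.card_Ico] using
        sq_sum_le_card_mul_sum_sq (s := Ico m n) (f := fun k => ‖y (k + 1) - y k‖)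

theorem sum_range_sum_Ico_sub_le (τ M : ℕ) {w : ℕ → ℝ} (hw : ∀ k, 0 ≤ w k) :
    ∑ n ∈ range M, ∑ k ∈ Ico (n - τ) n, w k ≤ τ * ∑ k ∈ range M, w k := by
  rw [sum_comm' (t' := range M) (s' := fun k => (Ioc k (k + τ)).filter (· < M))
    (fun n k => by simp only [mem_range, mem_Ico, mem_filter, mem_Ioc]; omega), mul_sum]
  refine sum_le_sum fun k _ => ?_
  rw [sum_const, nsmul_eq_mul]
  gcongr
  · exact hw k
  · exact_mod_cast (card_filter_le _ _).trans (by simp)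

theorem sum_range_norm_sub_delay_sq_le {E : Type*} [SeminormedAddCommGroup E] (y : ℕ → E)
    {τ : ℕ} {τn : ℕ → ℕ} (hτ : ∀ n, τn n ≤ τ) (M : ℕ) :
    ∑ n ∈ range M, ‖y n - y (n - τn n)‖ ^ 2 ≤
      (τ : ℝ) ^ 2 * ∑ k ∈ range M, ‖y (k + 1) - y k‖ ^ 2 := by
  have hdelay : ∀ n, ‖y n - y (n - τn n)‖ ^ 2 ≤
      τ * ∑ k ∈ Ico (n - τ) n, ‖y (k + 1) - y k‖ ^ 2 := fun n => by
    refine (norm_sub_sq_le_mul_sum_Ico y (Nat.sub_le n (τn n))).trans ?_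
    gcongr
    · have := hτ n; omega
    · exact hτ n
  calc ∑ n ∈ range M, ‖y n - y (n - τn n)‖ ^ 2
      ≤ ∑ n ∈ range M, τ * ∑ k ∈ Ico (n - τ) n, ‖y (k + 1) - y k‖ ^ 2 :=
        sum_le_sum fun n _ => hdelay n
    _ = τ * ∑ n ∈ range M, ∑ k ∈ Ico (n - τ) n, ‖y (k + 1) - y k‖ ^ 2 := (mul_sum ..).symm
    _ ≤ τ * (τ * ∑ k ∈ range M, ‖y (k + 1) - y k‖ ^ 2) := by
      gcongr
      exact sum_range_sum_Ico_sub_le τ M fun _ => by positivity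
    _ = _ := by ring

theorem Finset.inf'_sub_mul_sum_le {ι : Type*} {s : Finset ι} (hs : s.Nonempty) (F w : ι → ℝ)
    (c : ℝ) (hw : ∀ i ∈ s, 0 ≤ w i) :
    (s.inf' hs F - c) * ∑ i ∈ s, w i ≤ ∑ i ∈ s, w i * (F i - c) := by
  rw [mul_sum]
  refine sum_le_sum fun i hi => ?_
  rw [mul_comm]
  exact mul_le_mul_of_nonneg_left (sub_le_sub_right (inf'_le F hi) c) (hw i hi)

theorem mul_sum_sq_le_mul_sum_rpow_two_sub {α : ℕ → ℝ} (hpos : ∀ n, 0 < α n) (hanti : Antitone α)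
    {a B B' : ℝ} (ha : 0 ≤ a) (hB : 0 ≤ B) (hBB' : B * α 0 ^ a ≤ B') (s : Finset ℕ) :
    B * ∑ n ∈ s, α n ^ 2 ≤ B' * ∑ n ∈ s, α n ^ (2 - a) := by
  have hsq : ∀ n, α n ^ 2 ≤ α 0 ^ a * α n ^ (2 - a) := fun n => by
    calc α n ^ 2 = α n ^ a * α n ^ (2 - a) := by
          rw [← Real.rpow_add (hpos n), add_sub_cancel, Real.rpow_two]
      _ ≤ α 0 ^ a * α n ^ (2 - a) := by
          have := (hpos n).le
          gcongr
          exact hanti (Nat.zero_le n)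
  have hsum : ∑ n ∈ s, α n ^ 2 ≤ α 0 ^ a * ∑ n ∈ s, α n ^ (2 - a) := by
    rw [mul_sum]
    exact sum_le_sum fun n _ => hsq n
  have hrpow : 0 ≤ ∑ n ∈ s, α n ^ (2 - a) := sum_nonneg fun n _ => Real.rpow_nonneg (hpos n).le _
  calc B * ∑ n ∈ s, α n ^ 2 ≤ B * (α 0 ^ a * ∑ n ∈ s, α n ^ (2 - a)) :=
        mul_le_mul_of_nonneg_left hsum hB
    _ = B * α 0 ^ a * ∑ n ∈ s, α n ^ (2 - a) := by ring
    _ ≤ B' * ∑ n ∈ s, α n ^ (2 - a) := by gcongr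

theorem apply_intCast_sub_eq {X : Type*} {x : ℤ → X} {τ : ℕ}
    (hinit : ∀ k : ℤ, -(τ : ℤ) ≤ k → k ≤ 0 → x k = x 0) {m : ℕ} (hm : m ≤ τ) (n : ℕ) :
    x ((n : ℤ) - m) = x ((n - m : ℕ) : ℤ) := by
  rcases le_or_gt m n with hmn | hnm
  · rw [Nat.cast_sub hmn]
  · rw [Nat.sub_eq_zero_of_le hnm.le, hinit _ (by omega) (by omega), Nat.cast_zero]

section InnerProductSpace

variable {E : Type*} [NormedAddCommGroup E] [InnerProductSpace ℝ E]

def FirmlyNonexpansive (T : E → E) : Prop :=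
  ∀ x y, ‖T x - T y‖ ^ 2 ≤ ⟪T x - T y, x - y⟫

def HasSubgradientAt (f : E → ℝ) (v x : E) : Prop :=
  ∀ y, ⟪v, y - x⟫ ≤ f y - f x

namespace FirmlyNonexpansive

variable {T : E → E}

theorem norm_sub_le (hT : FirmlyNonexpansive T) (x y : E) : ‖T x - T y‖ ≤ ‖x - y‖ := by
  nlinarith [hT x y, real_inner_le_norm (T x - T y) (x - y), norm_nonneg (T x - T y),
    norm_nonneg (x - y)]

theorem norm_sub_fixedPoint_sq_le (hT : FirmlyNonexpansive T) {p : E} (hp : T p = p) (x : E) :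
    ‖T x - p‖ ^ 2 ≤ ‖x - p‖ ^ 2 - ‖T x - x‖ ^ 2 := by
  have h := hT x p
  rw [hp] at h
  have hsplit : T x - x = (T x - p) - (x - p) := by abel
  rw [hsplit, norm_sub_sq_real (T x - p) (x - p)]
  linarith

end FirmlyNonexpansive

theorem HasSubgradientAt.sub_le {f : E → ℝ} {v x : E} (h : HasSubgradientAt f v x) (y : E) :
    f x - f y ≤ ‖v‖ * ‖x - y‖ := by
  have h₂ := abs_real_inner_le_norm v (y - x)
  rw [norm_sub_rev] at h₂
  linarith [h y, neg_abs_le ⟪v, y - x⟫]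

theorem ConvexOn.exists_hasSubgradientAt [CompleteSpace E] {f : E → ℝ}
    (hf : ConvexOn ℝ Set.univ f) (hcont : Continuous f) (x₀ : E) :
    ∃ v, HasSubgradientAt f v x₀ := by
  set U : Set (E × ℝ) := {q | f q.1 < q.2}
  have hUconv : Convex ℝ U := by simpa using hf.convex_strict_epigraph
  have hUopen : IsOpen U := isOpen_lt (hcont.comp continuous_fst) continuous_snd
  obtain ⟨φ, hφ⟩ := geometric_hahn_banach_open_point hUconv hUopen
    (show (x₀, f x₀) ∉ U from lt_irrefl (f x₀))
  set ℓ := φ.comp (ContinuousLinearMap.inl ℝ E ℝ)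
  set c := φ (0, 1)
  have hφ_apply : ∀ y t, φ (y, t) = ℓ y + t * c := by
    intro y t
    rw [show ((y, t) : E × ℝ) = (y, 0) + t • (0, 1) by simp, map_add, map_smul, smul_eq_mul]
    rfl
  have hsep : ∀ y t, f y < t → ℓ y + t * c < ℓ x₀ + f x₀ * c := by
    intro y t ht
    simpa only [hφ_apply] using hφ (y, t) ht
  -- the hyperplane separating `(x₀, f x₀)` from the strict epigraph is not vertical
  have hc : c < 0 := by
    have := hsep x₀ (f x₀ + 1) (by linarith)
    linarith
  have hkey : ∀ y, ℓ y + f y * c ≤ ℓ x₀ + f x₀ * c := by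
    intro y
    refine le_of_forall_pos_lt_add fun ε hε => ?_
    have := hsep y (f y + ε / -c) (by linarith [div_pos hε (neg_pos.2 hc)])
    rw [add_mul, div_mul_eq_mul_div, div_neg, mul_div_cancel_right₀ ε hc.ne] at this
    linarith
  refine ⟨(InnerProductSpace.toDual ℝ E).symm ((-c)⁻¹ • ℓ), fun y => ?_⟩
  rw [InnerProductSpace.toDual_symm_apply, smul_apply, map_sub, smul_eq_mul,
    inv_mul_le_iff₀ (neg_pos.2 hc)]
  linarith [hkey y]

theorem subgradient_step_le {f : E → ℝ} {x w u g p : E} {α C : ℝ} (hα : 0 ≤ α)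
    (hw : ‖w - p‖ ^ 2 ≤ ‖x - p‖ ^ 2 - ‖w - x‖ ^ 2) (hg : HasSubgradientAt f g u) (hgC : ‖g‖ ≤ C)
    (hnext : f (w - α • g) - f u ≤ C * ‖w - α • g - u‖) :
    2 * α * (f (w - α • g) - f p) ≤
      ‖x - p‖ ^ 2 - ‖w - α • g - p‖ ^ 2 - ‖w - x‖ ^ 2 + 4 * α * C * ‖w - u‖
        + 3 * α ^ 2 * C ^ 2 := by
  have hC : 0 ≤ C := (norm_nonneg g).trans hgC
  have hexpand : ‖w - α • g - p‖ ^ 2 = ‖w - p‖ ^ 2 - 2 * α * ⟪g, w - p⟫ + α ^ 2 * ‖g‖ ^ 2 := by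
    rw [sub_right_comm, norm_sub_sq_real, real_inner_smul_right, real_inner_comm, norm_smul,
      Real.norm_of_nonneg hα]
    ring
  have hinner : f u - f p - C * ‖w - u‖ ≤ ⟪g, w - p⟫ := by
    have hwu := abs_real_inner_le_norm g (w - u)
    have hsplit : ⟪g, w - p⟫ = ⟪g, w - u⟫ - ⟪g, p - u⟫ := by
      rw [← inner_sub_right, sub_sub_sub_cancel_right]
    nlinarith [hg p, neg_abs_le ⟪g, w - u⟫, mul_le_mul_of_nonneg_right hgC (norm_nonneg (w - u))]
  have hmove : ‖w - α • g - u‖ ≤ ‖w - u‖ + α * C := by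
    calc ‖w - α • g - u‖ = ‖(w - u) - α • g‖ := by rw [sub_right_comm]
      _ ≤ ‖w - u‖ + ‖α • g‖ := norm_sub_le _ _
      _ ≤ ‖w - u‖ + α * C := by rw [norm_smul, Real.norm_of_nonneg hα]; gcongr
  have hgsq : ‖g‖ ^ 2 ≤ C ^ 2 := pow_le_pow_left₀ (norm_nonneg g) hgC 2
  nlinarith [mul_le_mul_of_nonneg_left hmove hC, mul_le_mul_of_nonneg_left hgsq (sq_nonneg α)]

section DelayedIteration

variable {f : E → ℝ} {T : E → E} {p : E} {y g : ℕ → E} {α : ℕ → ℝ} {C : ℝ} {τn : ℕ → ℕ}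

theorem delayed_subgradient_step_le (hT : FirmlyNonexpansive T) (hp : T p = p) (hα : ∀ n, 0 ≤ α n)
    (hy : ∀ n, y (n + 1) = T (y n) - α n • g n)
    (hg : ∀ n, HasSubgradientAt f (g n) (T (y (n - τn n)))) (hgC : ∀ n, ‖g n‖ ≤ C)
    (hsub : ∀ n, ∃ v, HasSubgradientAt f v (y (n + 1)) ∧ ‖v‖ ≤ C) {K : ℝ} (hK : 0 < K) (n : ℕ) :
    2 * α n * (f (y (n + 1)) - f p) ≤
      ‖y n - p‖ ^ 2 - ‖y (n + 1) - p‖ ^ 2 - ‖T (y n) - y n‖ ^ 2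
        + ‖y n - y (n - τn n)‖ ^ 2 / (2 * K) + (8 * K + 3) * α n ^ 2 * C ^ 2 := by
  obtain ⟨v, hv, hvC⟩ := hsub n
  have hC : 0 ≤ C := (norm_nonneg v).trans hvC
  have hnext : f (y (n + 1)) - f (T (y (n - τn n))) ≤ C * ‖y (n + 1) - T (y (n - τn n))‖ :=
    (hv.sub_le _).trans (mul_le_mul_of_nonneg_right hvC (norm_nonneg _))
  rw [hy n] at hnext ⊢
  have hstep := subgradient_step_le (hα n) (hT.norm_sub_fixedPoint_sq_le hp (y n)) (hg n)
    (hgC n) hnext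
  set Δ := ‖y n - y (n - τn n)‖
  have hdelay : 4 * α n * C * ‖T (y n) - T (y (n - τn n))‖ ≤ 4 * α n * C * Δ := by
    have := hα n
    gcongr
    exact hT.norm_sub_le _ _
  have hyoung : 4 * α n * C * Δ ≤ Δ ^ 2 / (2 * K) + 8 * K * α n ^ 2 * C ^ 2 := by
    have hsq : Δ ^ 2 / (2 * K) + 8 * K * α n ^ 2 * C ^ 2 - 4 * α n * C * Δ
        = (Δ - 4 * K * α n * C) ^ 2 / (2 * K) := by
      field_simp
      ring
    linarith [div_nonneg (sq_nonneg (Δ - 4 * K * α n * C)) (by positivity : (0 : ℝ) ≤ 2 * K)]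
  linarith

theorem sum_delayed_subgradient_steps_le (hT : FirmlyNonexpansive T) (hp : T p = p)
    (hα : ∀ n, 0 ≤ α n) (hy : ∀ n, y (n + 1) = T (y n) - α n • g n)
    (hg : ∀ n, HasSubgradientAt f (g n) (T (y (n - τn n)))) (hgC : ∀ n, ‖g n‖ ≤ C)
    (hsub : ∀ n, ∃ v, HasSubgradientAt f v (y (n + 1)) ∧ ‖v‖ ≤ C)
    {τ : ℕ} (hτ : ∀ n, τn n ≤ τ) (M : ℕ) :
    ∑ n ∈ range M, 2 * α n * (f (y (n + 1)) - f p) ≤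
      ‖y 0 - p‖ ^ 2 + (4 + 8 * ((τ : ℝ) + 1) ^ 2) * C ^ 2 * ∑ n ∈ range M, α n ^ 2 := by
  set K : ℝ := ((τ : ℝ) + 1) ^ 2
  have hK : 0 < K := by positivity
  have hsteps := sum_le_sum fun n (_ : n ∈ range M) =>
    delayed_subgradient_step_le (p := p) hT hp hα hy hg hgC hsub hK n
  simp only [sum_add_distrib, sum_sub_distrib, ← sum_div, ← sum_mul, ← mul_sum,
    sum_range_sub' (fun n => ‖y n - p‖ ^ 2)] at hsteps
  have hincr : ∀ k, ‖y (k + 1) - y k‖ ^ 2 ≤ 2 * (‖T (y k) - y k‖ ^ 2 + α k ^ 2 * C ^ 2) := by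
    intro k
    have hgk : ‖α k • g k‖ ≤ α k * C := by
      rw [norm_smul, Real.norm_of_nonneg (hα k)]
      exact mul_le_mul_of_nonneg_left (hgC k) (hα k)
    calc ‖y (k + 1) - y k‖ ^ 2 ≤ (‖T (y k) - y k‖ + α k * C) ^ 2 := by
          rw [hy k, sub_right_comm]
          gcongr
          exact (norm_sub_le _ _).trans (by gcongr)
      _ ≤ _ := by linarith [add_sq_le (a := ‖T (y k) - y k‖) (b := α k * C)]
  have hdelays : ∑ n ∈ range M, ‖y n - y (n - τn n)‖ ^ 2 ≤
      K * (2 * (∑ k ∈ range M, ‖T (y k) - y k‖ ^ 2 + C ^ 2 * ∑ k ∈ range M, α k ^ 2)) := by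
    calc _ ≤ (τ : ℝ) ^ 2 * ∑ k ∈ range M, ‖y (k + 1) - y k‖ ^ 2 :=
          sum_range_norm_sub_delay_sq_le y hτ M
      _ ≤ K * ∑ k ∈ range M, 2 * (‖T (y k) - y k‖ ^ 2 + α k ^ 2 * C ^ 2) := by
          gcongr with k
          · exact pow_le_pow_left₀ (Nat.cast_nonneg τ) (by linarith) 2
          · exact hincr k
      _ = _ := by simp only [← mul_sum, sum_add_distrib, ← sum_mul]; ring
  have hdiv : (∑ n ∈ range M, ‖y n - y (n - τn n)‖ ^ 2) / (2 * K) ≤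
      ∑ k ∈ range M, ‖T (y k) - y k‖ ^ 2 + C ^ 2 * ∑ k ∈ range M, α k ^ 2 := by
    rw [div_le_iff₀ (by positivity)]
    linarith
  linarith [sq_nonneg ‖y M - p‖]

end DelayedIteration

end InnerProductSpace

theorem fdsm_rate_best_function_values (d : ℕ)
    (T : EuclideanSpace ℝ (Fin d) → EuclideanSpace ℝ (Fin d))
    (hT : ∀ x y, ⟪T x - T y, x - y⟫ ≥ ‖T x - T y‖ ^ 2)
    (f : EuclideanSpace ℝ (Fin d) → ℝ) (hf : ConvexOn ℝ Set.univ f)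
    (a : ℝ) (ha : a ∈ Set.Ioo (0 : ℝ) 1)
    (τ : ℕ) (τn : ℕ → ℕ) (hτ : ∀ n, τn n ≤ τ)
    (x : ℤ → EuclideanSpace ℝ (Fin d))
    (hinit : ∀ k : ℤ, -(τ : ℤ) ≤ k → k ≤ 0 → x k = x 0)
    (α : ℕ → ℝ) (hαpos : ∀ n, 0 < α n) (hαmono : ∀ n, α (n + 1) ≤ α n)
    (hα0 : (3 + 2 * ((τ : ℝ) + 1) ^ 2) * α 0 ^ a < 8)
    (g : ℕ → EuclideanSpace ℝ (Fin d))
    (hg : ∀ (n : ℕ) (y : EuclideanSpace ℝ (Fin d)),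
      ⟪g n, y - T (x ((n : ℤ) - τn n))⟫ ≤ f y - f (T (x ((n : ℤ) - τn n))))
    (hiter : ∀ n : ℕ, x ((n : ℤ) + 1) = T (x (n : ℤ)) - α n • g n)
    (C : ℝ)
    (hsgbdd : ∀ (n : ℕ) (v : EuclideanSpace ℝ (Fin d)),
      ((∀ y, ⟪v, y - x (n : ℤ)⟫ ≤ f y - f (x (n : ℤ))) ∨
        (∀ y, ⟪v, y - T (x (n : ℤ))⟫ ≤ f y - f (T (x (n : ℤ))))) → ‖v‖ ≤ C)
    (xstar : EuclideanSpace ℝ (Fin d)) (hxstarfix : T xstar = xstar) :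
    ∀ N : ℕ,
      Finset.inf' (Finset.range (N + 1)) (by simp) (fun n => f (x ((n : ℤ) + 1))) - f xstar ≤
        (‖x 0 - xstar‖ ^ 2 + 2 * C ^ 2 * ∑ n ∈ Finset.range (N + 1), α n ^ 2
            + 40 * C ^ 2 * ∑ n ∈ Finset.range (N + 1), α n ^ (2 - a)) /
          (2 * ∑ n ∈ Finset.range (N + 1), α n) := by
  intro N
  have hgrad : ∀ n, HasSubgradientAt f (g n) (T (x ((n - τn n : ℕ) : ℤ))) := fun n => by
    rw [← apply_intCast_sub_eq hinit (hτ n)]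
    exact hg n
  have hsub : ∀ n : ℕ, ∃ v, HasSubgradientAt f v (x ((n + 1 : ℕ) : ℤ)) ∧ ‖v‖ ≤ C := fun n => by
    obtain ⟨v, hv⟩ :=
      hf.exists_hasSubgradientAt (continuousOn_univ.1 (hf.continuousOn isOpen_univ)) _
    exact ⟨v, hv, hsgbdd _ v (Or.inl hv)⟩
  have hsum := sum_delayed_subgradient_steps_le (y := fun n : ℕ => x n) hT hxstarfix
    (fun n => (hαpos n).le) (by exact_mod_cast hiter) hgrad
    (fun n => hsgbdd _ _ (Or.inr (hgrad n))) hsub hτ (N + 1)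
  push_cast at hsum
  have hsq := mul_sum_sq_le_mul_sum_rpow_two_sub hαpos (antitone_nat_of_succ_le hαmono) ha.1.le
    (by positivity) (by nlinarith [Real.rpow_nonneg (hαpos 0).le a] :
      (2 + 8 * ((τ : ℝ) + 1) ^ 2) * α 0 ^ a ≤ 40) (range (N + 1))
  have hS : 0 < 2 * ∑ n ∈ range (N + 1), α n :=
    mul_pos two_pos (sum_pos (fun n _ => hαpos n) nonempty_range_add_one)
  rw [le_div_iff₀ hS, mul_sum]
  refine (inf'_sub_mul_sum_le _ _ _ _ fun n _ => mul_nonneg zero_le_two (hαpos n).le).trans ?_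
  linarith [mul_le_mul_of_nonneg_left hsq (sq_nonneg C)]
end
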